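/- Let σ be an element of the increasing monoid I. Then there exists a unique weakly increasing sequence of integers 1 ≤ m_1 ≤ m_2 ≤ ⋯ ≤ m_s such that σ = α_{m_1} ∘ α_{m_2} ∘ ⋯ ∘ α_{m_s}; moreover s = ℓ(σ), the length of σ. -/

import Mathlib

open scoped Classical

noncomputable section

/-- The increasing monoid `I`: the submonoid of `Function.End ℕ+` (functions under
composition) consisting of strictly increasing functions `σ : ℕ+ → ℕ+` such that
`σ n = n + ℓ` for some `ℓ` and all sufficiently large `n`. -/
def IncMonoid : Submonoid (Function.End ℕ+) where
  carrier := {f | StrictMono f ∧ ∃ (l : ℕ) (N : ℕ+), ∀ n : ℕ+, N ≤ n → ((f n : ℕ) = (n : ℕ) + l)}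
  one_mem' := ⟨fun _ _ h => h, 0, 1, fun n _ => by show ((n : ℕ+) : ℕ) = (n : ℕ) + 0; omega⟩
  mul_mem' := by
    rintro f g ⟨hf1, lf, Nf, hf2⟩ ⟨hg1, lg, Ng, hg2⟩
    refine ⟨hf1.comp hg1, lg + lf, max Nf Ng, fun n hn => ?_⟩
    have h1 : (g n : ℕ) = (n : ℕ) + lg := hg2 n (le_trans (le_max_right _ _) hn)
    have h2 : Nf ≤ g n := by
      rw [← PNat.coe_le_coe, h1]
      have : (Nf : ℕ) ≤ (n : ℕ) := (PNat.coe_le_coe _ _).2 (le_trans (le_max_left _ _) hn)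
      omega
    have h3 := hf2 (g n) h2
    show ((f (g n) : ℕ)) = (n : ℕ) + (lg + lf)
    omega

/-- The increasing monoid, as a type. -/
abbrev IncM : Type := IncMonoid

theorem IncM.strictMono (σ : IncM) : StrictMono σ.1 := σ.2.1

theorem IncM.le_apply (σ : IncM) (n : ℕ+) : n ≤ σ.1 n := by
  induction n using PNat.recOn with
  | one => exact (σ.1 1).one_le
  | succ n ih =>
      have h2 : σ.1 n < σ.1 (n + 1) := σ.strictMono (by rw [← PNat.coe_lt_coe]; push_cast; omega)
      rw [← PNat.coe_le_coe] at *
      rw [← PNat.coe_lt_coe] at h2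
      push_cast at *
      omega

/-- The underlying function of the generator `α_k`. -/
def alphaFun (k : ℕ+) : Function.End ℕ+ := fun n => if n < k then n else n + 1

theorem alphaFun_strictMono (k : ℕ+) : StrictMono (alphaFun k) := by
  intro a b hab
  unfold alphaFun
  split_ifs with h1 h2 <;>
    rw [← PNat.coe_lt_coe] at * <;> push_cast at * <;> omega

theorem alphaFun_mem (k : ℕ+) : alphaFun k ∈ IncMonoid := by
  refine ⟨alphaFun_strictMono k, 1, k, fun n hn => ?_⟩
  unfold alphaFun
  rw [if_neg (not_lt.2 hn)]
  push_cast
  ring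

/-- The generator `α_k` of the increasing monoid (`k ≥ 1`). -/
def alpha (k : ℕ+) : IncM := ⟨alphaFun k, alphaFun_mem k⟩

/-- The submonoid `I_{≥ n}` of `I` generated by the `α_i` with `i ≥ n`. -/
def Iges (n : ℕ+) : Submonoid IncM := Submonoid.closure (alpha '' Set.Ici n)

/-- The submonoid `I_{> n}` of `I` generated by the `α_i` with `i > n`. -/
def Igt (n : ℕ) : Submonoid IncM := Submonoid.closure {s | ∃ i : ℕ+, n < (i : ℕ) ∧ s = alpha i}

/-- The monoid algebra `k[I]` of the increasing monoid. -/
abbrev IncAlg (k : Type*) [Field k] : Type _ := MonoidAlgebra k IncM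

/-- The image of `σ ∈ I` in the monoid algebra `k[I]`. -/
abbrev ofInc (k : Type*) [Field k] (σ : IncM) : IncAlg k := MonoidAlgebra.of k IncM σ

/-- A `k[I]`-module is smooth if every vector is fixed by some `I_{>n}`. -/
def IsSmoothMod (k : Type*) [Field k] (M : Type*) [AddCommMonoid M]
    [Module (IncAlg k) M] : Prop :=
  ∀ x : M, ∃ n : ℕ, ∀ σ ∈ Igt n, ofInc k σ • x = x

/-! ### The principal modules `A^r` -/

/-- Index set for the basis of the principal module `A^r`:
strictly increasing `r`-tuples of positive integers. -/
def Idx (r : ℕ) : Type := {v : Fin r → ℕ+ // StrictMono v}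

/-- The action of `σ ∈ I` on the index set of `A^r`. -/
def idxAct {r : ℕ} (σ : IncM) (t : Idx r) : Idx r :=
  ⟨σ.1 ∘ t.1, (IncM.strictMono σ).comp t.2⟩

/-- The representation of the increasing monoid on the principal module `A^r`. -/
def prinRep (k : Type*) [Field k] (r : ℕ) : Representation k IncM (Idx r →₀ k) where
  toFun σ := Finsupp.lmapDomain k k (idxAct σ)
  map_one' := LinearMap.ext fun v => by
    have h : (idxAct (1 : IncM) : Idx r → Idx r) = id := funext fun t => rfl
    simp [Finsupp.lmapDomain_apply, h, Finsupp.mapDomain_id]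
  map_mul' := fun σ τ => LinearMap.ext fun v => by
    have h : (idxAct (σ * τ) : Idx r → Idx r) = (idxAct σ) ∘ (idxAct τ) :=
      funext fun t => rfl
    show Finsupp.lmapDomain k k (idxAct (σ * τ)) v =
      Finsupp.lmapDomain k k (idxAct σ) (Finsupp.lmapDomain k k (idxAct τ) v)
    simp [Finsupp.lmapDomain_apply, h, Finsupp.mapDomain_comp]

/-- The principal module `A^r`, as a module over the monoid algebra `k[I]`. -/
abbrev PrinMod (k : Type*) [Field k] (r : ℕ) : Type _ := (prinRep k r).asModule

/-- The basis vector `e_t` of the principal module `A^r`. -/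
def ePrin (k : Type*) [Field k] {r : ℕ} (t : Idx r) : PrinMod k r :=
  (prinRep k r).asModuleEquiv.symm (Finsupp.single t 1)

/-- The tuple `(1, 2, …, r)` indexing the canonical generator `e_{1,…,r}` of `A^r`. -/
def iotaIdx (r : ℕ) : Idx r :=
  ⟨fun i => ⟨(i : ℕ) + 1, Nat.succ_pos _⟩, fun a b h => by
    exact Nat.succ_lt_succ h⟩

/-! ### The simple modules `B^n` -/

/-- `σ ∈ I` fixes the natural number `n`, with the convention `σ 0 = 0`. -/
def fixesNat (σ : IncM) (n : ℕ) : Prop := ∀ h : 0 < n, σ.1 ⟨n, h⟩ = ⟨n, h⟩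

theorem fixesNat_mul (σ τ : IncM) (n : ℕ) :
    fixesNat (σ * τ) n ↔ fixesNat σ n ∧ fixesNat τ n := by
  rcases Nat.eq_zero_or_pos n with h0 | h0
  · subst h0
    constructor
    · exact fun _ => ⟨fun h => absurd h (lt_irrefl 0), fun h => absurd h (lt_irrefl 0)⟩
    · exact fun _ h => absurd h (lt_irrefl 0)
  · set p : ℕ+ := ⟨n, h0⟩
    have happ : ∀ h : 0 < n, (σ * τ).1 ⟨n, h⟩ = σ.1 (τ.1 ⟨n, h⟩) := fun _ => rfl
    constructor
    · intro h
      have hfix : σ.1 (τ.1 p) = p := h h0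
      have h1 : p ≤ τ.1 p := τ.le_apply p
      have h2 : τ.1 p ≤ σ.1 (τ.1 p) := σ.le_apply _
      have hτp : τ.1 p = p := le_antisymm (h2.trans_eq hfix) h1
      have hσp : σ.1 p = p := by rw [hτp] at hfix; exact hfix
      exact ⟨fun _ => hσp, fun _ => hτp⟩
    · rintro ⟨hσ, hτ⟩ h
      rw [happ h]
      have := hτ h0
      rw [this, hσ h0]

/-- The representation of the increasing monoid on the simple module `B^n`:
`σ` acts by the identity if `σ(n) = n` (with `σ(0) = 0`) and by `0` otherwise. -/
def bRep (k : Type*) [Field k] (n : ℕ) : Representation k IncM k where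
  toFun σ := if fixesNat σ n then 1 else 0
  map_one' := by
    rw [if_pos]
    intro h
    rfl
  map_mul' := fun σ τ => by
    by_cases hσ : fixesNat σ n
    · by_cases hτ : fixesNat τ n
      · rw [if_pos ((fixesNat_mul σ τ n).2 ⟨hσ, hτ⟩), if_pos hσ, if_pos hτ, one_mul]
      · rw [if_neg (fun h => hτ ((fixesNat_mul σ τ n).1 h).2), if_pos hσ, if_neg hτ, one_mul]
    · by_cases hτ : fixesNat τ n
      · rw [if_neg (fun h => hσ ((fixesNat_mul σ τ n).1 h).1), if_neg hσ, if_pos hτ, mul_one]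
      · rw [if_neg (fun h => hσ ((fixesNat_mul σ τ n).1 h).1), if_neg hσ, if_neg hτ, mul_zero]

/-- The simple module `B^n`, as a module over the monoid algebra `k[I]`. -/
abbrev BMod (k : Type*) [Field k] (n : ℕ) : Type _ := (bRep k n).asModule

/-!
Let `k` be the least point moved by `σ`. Points below `k` are fixed and points above `k`
are sent above `k`, so `k` is not in the image of `σ`; hence `σ = α_k ∘ τ` with
`ℓ(τ) = ℓ(σ) - 1` and `τ` fixing everything below `k`, and induction on the length gives
a weakly increasing factorization. Conversely, in a weakly increasing product
`α_{m_1} ∘ ⋯ ∘ α_{m_s}` the first index `m_1` is the least point moved, so two such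
factorizations have the same first index, and cancelling `α_{m_1}` (which is injective)
gives uniqueness. Far out the product is `n ↦ n + s`, so `s = ℓ(σ)`.
-/

namespace IncM

lemma mul_apply (σ τ : IncM) (n : ℕ+) : (σ * τ).1 n = σ.1 (τ.1 n) := rfl

lemma apply_eq_self_of_mul_apply_eq_self {σ τ : IncM} {n : ℕ+} (h : (σ * τ).1 n = n) :
    τ.1 n = n :=
  le_antisymm ((σ.le_apply _).trans_eq h) (τ.le_apply n)

lemma apply_eq_self_of_le {σ : IncM} {m : ℕ+} (hm : σ.1 m = m) :
    ∀ {n : ℕ+}, n ≤ m → σ.1 n = n := by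
  induction m using PNat.recOn with
  | one => intro n hn; rw [le_antisymm hn one_le, hm]
  | succ m ih =>
    have hlt : σ.1 m < m + 1 := hm ▸ σ.strictMono (PNat.lt_add_right m 1)
    have hfix : σ.1 m = m :=
      le_antisymm (PNat.lt_add_one_iff.1 hlt) (σ.le_apply m)
    intro n hn
    rcases hn.lt_or_eq with hn | rfl
    · exact ih hfix (PNat.lt_add_one_iff.1 hn)
    · exact hm

lemma eq_one_of_eventually_fixed {σ : IncM} {N : ℕ+} (h : ∀ n, N ≤ n → σ.1 n = n) :
    σ = 1 :=
  Subtype.ext <| funext fun n => apply_eq_self_of_le (h (N ⊔ n) le_sup_left) le_sup_right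

lemma apply_ne_of_apply_ne_of_forall_lt {σ : IncM} {k : ℕ+} (hk : σ.1 k ≠ k)
    (hfix : ∀ n < k, σ.1 n = n) (n : ℕ+) : σ.1 n ≠ k := by
  rcases lt_trichotomy n k with h | rfl | h
  · exact (hfix n h).trans_ne h.ne
  · exact hk
  · exact (h.trans_le (σ.le_apply n)).ne'

end IncM

lemma alpha_apply_of_lt {k n : ℕ+} (h : n < k) : (alpha k).1 n = n := if_pos h

lemma alpha_apply_of_le {k n : ℕ+} (h : k ≤ n) : (alpha k).1 n = n + 1 := if_neg h.not_gt

lemma alpha_mul_apply_self_ne (k : ℕ+) (ρ : IncM) : (alpha k * ρ).1 k ≠ k := by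
  rw [IncM.mul_apply, alpha_apply_of_le (ρ.le_apply k)]
  exact (PNat.lt_add_right _ _ |>.trans_le' (ρ.le_apply k)).ne'

lemma alpha_mul_left_cancel {k : ℕ+} {σ τ : IncM} (h : alpha k * σ = alpha k * τ) : σ = τ :=
  Subtype.ext <| funext fun n =>
    (alphaFun_strictMono k).injective (congrFun (congrArg Subtype.val h) n)

lemma prod_map_alpha_apply_of_lt {L : List ℕ+} {n : ℕ+} (h : ∀ m ∈ L, n < m) :
    ((L.map alpha).prod).1 n = n := by
  induction L with
  | nil => rfl
  | cons a L ih =>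
    rw [List.map_cons, List.prod_cons, IncM.mul_apply, ih fun m hm => h m (by simp [hm]),
      alpha_apply_of_lt (h a (by simp))]

lemma prod_map_alpha_apply_of_le {L : List ℕ+} {n : ℕ+} (h : ∀ m ∈ L, m ≤ n) :
    (((L.map alpha).prod).1 n : ℕ) = n + L.length := by
  induction L with
  | nil => rfl
  | cons a L ih =>
    have ih := ih fun m hm => h m (by simp [hm])
    have ha : a ≤ ((L.map alpha).prod).1 n := by
      rw [← PNat.coe_le_coe, ih]
      exact (PNat.coe_le_coe _ _).2 (h a (by simp)) |>.trans (by omega)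
    rw [List.map_cons, List.prod_cons, IncM.mul_apply, alpha_apply_of_le ha, PNat.add_coe, ih,
      List.length_cons, PNat.one_coe, add_assoc]

lemma prod_map_alpha_apply_of_lt_head {a : ℕ+} {L : List ℕ+}
    (hL : (a :: L).Pairwise (· ≤ ·)) {n : ℕ+} (hn : n < a) :
    (((a :: L).map alpha).prod).1 n = n :=
  prod_map_alpha_apply_of_lt fun m hm => by
    rcases List.mem_cons.1 hm with rfl | hm
    exacts [hn, hn.trans_le (List.rel_of_pairwise_cons hL hm)]

lemma length_eq_of_prod_map_alpha_apply {L : List ℕ+} {l : ℕ} {N : ℕ+}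
    (h : ∀ n : ℕ+, N ≤ n → ((((L.map alpha).prod).1 n : ℕ) = n + l)) : L.length = l := by
  obtain ⟨n, hn⟩ := (insert N L.toFinset).exists_le
  have := prod_map_alpha_apply_of_le (L := L) fun m hm => hn m (by simp [hm])
  rw [h n (hn N (by simp))] at this
  omega

lemma le_of_forall_lt_prod_map_alpha_apply_eq {L : List ℕ+} (hL : L.Pairwise (· ≤ ·))
    {c : ℕ+} (h : ∀ n < c, ((L.map alpha).prod).1 n = n) : ∀ m ∈ L, c ≤ m := by
  cases L with
  | nil => simp
  | cons a L =>
    have hca : c ≤ a := not_lt.1 fun hac => alpha_mul_apply_self_ne a _ (h a hac)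
    intro m hm
    rcases List.mem_cons.1 hm with rfl | hm
    · exact hca
    · exact hca.trans (List.rel_of_pairwise_cons hL hm)

lemma eq_of_pairwise_of_prod_map_alpha_eq {L L' : List ℕ+} (hL : L.Pairwise (· ≤ ·))
    (hL' : L'.Pairwise (· ≤ ·)) (h : (L.map alpha).prod = (L'.map alpha).prod) : L = L' := by
  induction L generalizing L' with
  | nil =>
    cases L' with
    | nil => rfl
    | cons b L' =>
      exact absurd (congrFun (congrArg Subtype.val h) b).symm (alpha_mul_apply_self_ne b _)
  | cons a L ih =>
    cases L' with
    | nil => exact absurd (congrFun (congrArg Subtype.val h) a) (alpha_mul_apply_self_ne a _)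
    | cons b L' =>
      have hab : a ≤ b := le_of_forall_lt_prod_map_alpha_apply_eq hL'
        (h ▸ fun _ => prod_map_alpha_apply_of_lt_head hL) b (by simp)
      have hba : b ≤ a := le_of_forall_lt_prod_map_alpha_apply_eq hL
        (h.symm ▸ fun _ => prod_map_alpha_apply_of_lt_head hL') a (by simp)
      obtain rfl := le_antisymm hab hba
      simp only [List.map_cons, List.prod_cons] at h
      rw [ih hL.of_cons hL'.of_cons (alpha_mul_left_cancel h)]

lemma exists_eq_alpha_mul {σ : IncM} {k : ℕ+} {l : ℕ} {N : ℕ+}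
    (hσ : ∀ n : ℕ+, N ≤ n → ((σ.1 n : ℕ) = n + (l + 1))) (hk : ∀ n, σ.1 n ≠ k) :
    ∃ τ : IncM, (∀ n : ℕ+, N ⊔ k ≤ n → ((τ.1 n : ℕ) = n + l)) ∧
      σ = alpha k * τ := by
  let τf : ℕ+ → ℕ+ := fun n => if σ.1 n < k then σ.1 n else σ.1 n - 1
  have hτf_ge : ∀ n, k < σ.1 n → (τf n : ℕ) = σ.1 n - 1 := fun n hn => by
    rw [show τf n = σ.1 n - 1 from if_neg hn.not_gt, PNat.sub_coe, if_pos (hn.trans_le' one_le),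
      PNat.one_coe]
  have hατ : ∀ n, alphaFun k (τf n) = σ.1 n := by
    intro n
    rcases (hk n).lt_or_gt with hn | hn
    · simp only [τf, alphaFun, if_pos hn]
    · have hτ := hτf_ge n hn
      rw [← PNat.coe_lt_coe] at hn
      rw [alphaFun, if_neg (by rw [← PNat.coe_lt_coe]; omega), ← PNat.coe_inj, PNat.add_coe,
        hτ, PNat.one_coe]
      omega
  have hτf_mono : StrictMono τf := fun a b hab =>
    (alphaFun_strictMono k).lt_iff_lt.1 (by rw [hατ, hατ]; exact σ.strictMono hab)
  have hτf_shift : ∀ n : ℕ+, N ⊔ k ≤ n → ((τf n : ℕ) = n + l) := fun n hn => by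
    have hσn := hσ n (le_sup_left.trans hn)
    have hkn : (k : ℕ) ≤ n := PNat.coe_le_coe _ _ |>.2 (le_sup_right.trans hn)
    rw [hτf_ge n (by rw [← PNat.coe_lt_coe]; omega)]
    omega
  exact ⟨⟨τf, hτf_mono, l, N ⊔ k, hτf_shift⟩, hτf_shift,
    Subtype.ext (funext fun n => (hατ n).symm)⟩

lemma exists_pairwise_prod_map_alpha_eq {σ : IncM} {l : ℕ} {N : ℕ+}
    (hσ : ∀ n : ℕ+, N ≤ n → ((σ.1 n : ℕ) = n + l)) :
    ∃ L : List ℕ+, L.Pairwise (· ≤ ·) ∧ (L.map alpha).prod = σ := by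
  induction l generalizing σ N with
  | zero =>
    refine ⟨[], List.Pairwise.nil, ?_⟩
    exact (IncM.eq_one_of_eventually_fixed fun n hn => PNat.coe_inj.1 (hσ n hn)).symm
  | succ l ih =>
    have hmoved : ∃ n, σ.1 n ≠ n :=
      ⟨N, fun h => by have := hσ N le_rfl; rw [h] at this; omega⟩
    obtain ⟨k, hk, hfix⟩ : ∃ k, σ.1 k ≠ k ∧ ∀ n < k, σ.1 n = n :=
      ⟨PNat.find hmoved, PNat.find_spec hmoved, fun n hn => not_not.1 (PNat.find_min hmoved hn)⟩
    obtain ⟨τ, hτ, rfl⟩ :=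
      exists_eq_alpha_mul hσ (IncM.apply_ne_of_apply_ne_of_forall_lt hk hfix)
    obtain ⟨L, hL, rfl⟩ := ih hτ
    have hkL := le_of_forall_lt_prod_map_alpha_apply_eq hL fun n hn =>
      IncM.apply_eq_self_of_mul_apply_eq_self (hfix n hn)
    exact ⟨k :: L, List.pairwise_cons.2 ⟨hkL, hL⟩, by rw [List.map_cons, List.prod_cons]⟩

/-- Every `σ` in the increasing monoid is uniquely a product
`α_{m_1} ∘ α_{m_2} ∘ ⋯ ∘ α_{m_s}` with `m_1 ≤ m_2 ≤ ⋯ ≤ m_s`, and `s = ℓ(σ)`. -/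
theorem exists_unique_weak_factorization (σ : IncM) :
    (∃! L : List ℕ+, L.Pairwise (· ≤ ·) ∧ σ = (L.map alpha).prod) ∧
      ∀ L : List ℕ+, L.Pairwise (· ≤ ·) → σ = (L.map alpha).prod →
        ∀ (l : ℕ) (N : ℕ+), (∀ n : ℕ+, N ≤ n → ((σ.1 n : ℕ) = (n : ℕ) + l)) →
          L.length = l := by
  obtain ⟨-, l, N, hσ⟩ := σ.2
  obtain ⟨L, hL, hLσ⟩ := exists_pairwise_prod_map_alpha_eq hσ
  refine ⟨⟨L, ⟨hL, hLσ.symm⟩, fun L' ⟨hL', hL'σ⟩ => ?_⟩, ?_⟩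
  · exact eq_of_pairwise_of_prod_map_alpha_eq hL' hL (hL'σ.symm.trans hLσ.symm)
  · rintro L' - rfl l' N' hσ'
    exact length_eq_of_prod_map_alpha_apply hσ'

end
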